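/- If [[A,P],[Q,R]] ∈ Sp(2(n+k)) with A of size 2n×2n and Q of size 2k×2n, then setting B = Q^T Q one has B + i(A^T J_{2n} A - J_{2n}) ≥ 0 as a complex Hermitian matrix; that is, B belongs to the set F_n^0(A) defining a quasifree Gaussian channel. -/
import Mathlib


open Matrix
open scoped ComplexOrder

/-- The 2x2 matrix J₂ = [[0,-1],[1,0]]. -/
def J2 : Matrix (Fin 2) (Fin 2) ℝ := !![0, -1; 1, 0]

/-- The 2n x 2n block-diagonal matrix with n diagonal blocks J₂. -/
def J (n : ℕ) : Matrix (Fin (2*n)) (Fin (2*n)) ℝ :=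
  Matrix.of fun i j =>
    if i.val = j.val + 1 ∧ j.val % 2 = 0 then 1
    else if j.val = i.val + 1 ∧ i.val % 2 = 0 then -1 else 0
lemma J_apply (n : ℕ) (i j : Fin (2*n)) :
    _root_.J n i j = if i.val = j.val + 1 ∧ j.val % 2 = 0 then 1
      else if j.val = i.val + 1 ∧ i.val % 2 = 0 then -1 else 0 := rfl

lemma J_transpose (n : ℕ) : (_root_.J n)ᵀ = -(_root_.J n) := by
  ext i j
  simp only [Matrix.transpose_apply, Matrix.neg_apply, J_apply]
  split_ifs <;> solve | (exfalso; omega) | norm_num | (exfalso; simp only [true_and] at *; omega)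

lemma J_mul_J (n : ℕ) : _root_.J n * _root_.J n = -1 := by
  ext i j
  rw [Matrix.mul_apply]
  have hilt := i.isLt
  by_cases hi : i.val % 2 = 0
  · have hlt : i.val + 1 < 2 * n := by omega
    rw [Finset.sum_eq_single (⟨i.val + 1, hlt⟩ : Fin (2*n))]
    · simp only [J_apply, Matrix.neg_apply, Matrix.one_apply, Fin.ext_iff]
      split_ifs <;> solve | (exfalso; omega) | norm_num | (exfalso; simp only [true_and] at *; omega)
    · intro l _ hl
      have hl' : l.val ≠ i.val + 1 := fun h => hl (Fin.ext h)
      simp only [J_apply]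
      split_ifs <;> solve | (exfalso; omega) | norm_num | (exfalso; simp only [true_and] at *; omega)
    · intro h; exact absurd (Finset.mem_univ _) h
  · have hlt : i.val - 1 < 2 * n := by omega
    rw [Finset.sum_eq_single (⟨i.val - 1, hlt⟩ : Fin (2*n))]
    · simp only [J_apply, Matrix.neg_apply, Matrix.one_apply, Fin.ext_iff]
      split_ifs <;> solve | (exfalso; omega) | norm_num | (exfalso; simp only [true_and] at *; omega)
    · intro l _ hl
      have hl' : l.val ≠ i.val - 1 := fun h => hl (Fin.ext h)
      simp only [J_apply]
      split_ifs <;> solve | (exfalso; omega) | norm_num | (exfalso; simp only [true_and] at *; omega)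
    · intro h; exact absurd (Finset.mem_univ _) h

lemma map_conjTranspose_real {m p : Type*} (M : Matrix m p ℝ) :
    (M.map Complex.ofReal)ᴴ = Mᵀ.map Complex.ofReal := by
  ext i j
  simp [Matrix.conjTranspose_apply, Complex.conj_ofReal]

lemma H_posSemidef (k : ℕ) :
    (1 - Complex.I • (_root_.J k).map Complex.ofReal :
      Matrix (Fin (2*k)) (Fin (2*k)) ℂ).PosSemidef := by
  set Jc : Matrix (Fin (2*k)) (Fin (2*k)) ℂ := (_root_.J k).map Complex.ofReal with hJc
  set H : Matrix (Fin (2*k)) (Fin (2*k)) ℂ := 1 - Complex.I • Jc with hH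
  have hJct : Jcᴴ = -Jc := by
    rw [hJc, map_conjTranspose_real, _root_.J_transpose]
    ext i j; simp
  have hHerm : Hᴴ = H := by
    rw [hH, Matrix.conjTranspose_sub, Matrix.conjTranspose_smul, hJct,
      Matrix.conjTranspose_one]
    simp [Complex.star_def]
  have hJc2 : Jc * Jc = -1 := by
    rw [hJc, show (_root_.J k).map Complex.ofReal
        = (_root_.J k).map Complex.ofRealHom from rfl,
      ← Matrix.map_mul, _root_.J_mul_J]
    ext i j; simp [Matrix.one_apply]; split_ifs <;> simp
  have hXX : (Complex.I • Jc) * (Complex.I • Jc) = 1 := by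
    rw [Matrix.smul_mul, Matrix.mul_smul, smul_smul, Complex.I_mul_I, hJc2]
    simp
  have hsq : H * H = (2 : ℂ) • H := by
    rw [hH, sub_mul, one_mul, mul_sub, mul_one, hXX]
    module
  set c : ℂ := Complex.ofReal ((Real.sqrt 2)⁻¹) with hc
  have hc2 : c * c = (2 : ℂ)⁻¹ := by
    rw [hc, ← Complex.ofReal_mul, ← mul_inv, Real.mul_self_sqrt (by norm_num)]
    push_cast
    ring
  have key : H = (c • H)ᴴ * (c • H) := by
    rw [Matrix.conjTranspose_smul, hHerm]
    have hstar : star c = c := by simp [hc, Complex.star_def, Complex.conj_ofReal]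
    rw [hstar, Matrix.smul_mul, Matrix.mul_smul, smul_smul, hsq, hc2, smul_smul]
    norm_num
  rw [key]
  exact Matrix.posSemidef_conjTranspose_mul_self _

/-- If [[A,P],[Q,R]] ∈ Sp(2(n+k)) then B = QᵀQ satisfies B + i(AᵀJA - J) ≥ 0,
i.e. B ∈ F_n⁰(A). -/
theorem dilation_gives_quasifree_noise {n k : ℕ}
    (A : Matrix (Fin (2*n)) (Fin (2*n)) ℝ) (P : Matrix (Fin (2*n)) (Fin (2*k)) ℝ)
    (Q : Matrix (Fin (2*k)) (Fin (2*n)) ℝ) (R : Matrix (Fin (2*k)) (Fin (2*k)) ℝ)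
    (hM : (Matrix.fromBlocks A P Q R)ᵀ * Matrix.fromBlocks (J n) 0 0 (J k) *
        Matrix.fromBlocks A P Q R = Matrix.fromBlocks (J n) 0 0 (J k)) :
    ((Qᵀ * Q).map (Complex.ofReal) +
        Complex.I • ((Aᵀ * J n * A - J n).map (Complex.ofReal))).PosSemidef := by
  rw [Matrix.fromBlocks_transpose, Matrix.fromBlocks_multiply, Matrix.fromBlocks_multiply] at hM
  have h := congrArg Matrix.toBlocks₁₁ hM
  simp only [Matrix.toBlocks_fromBlocks₁₁, Matrix.mul_zero, Matrix.zero_mul,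
    add_zero, zero_add] at h
  have h2 : Aᵀ * _root_.J n * A - _root_.J n = -(Qᵀ * _root_.J k * Q) := by
    nth_rewrite 2 [← h]
    abel
  rw [h2]
  have hmapneg : ((-(Qᵀ * _root_.J k * Q)).map Complex.ofReal)
      = -((Qᵀ * _root_.J k * Q).map Complex.ofReal) := by
    ext i j; simp
  rw [hmapneg]
  have hq : (Qᵀ * Q).map Complex.ofReal
      = (Qᵀ).map Complex.ofReal * Q.map Complex.ofReal :=
    Matrix.map_mul (f := Complex.ofRealHom)
  have hqjq : (Qᵀ * _root_.J k * Q).map Complex.ofReal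
      = (Qᵀ).map Complex.ofReal * (_root_.J k).map Complex.ofReal * Q.map Complex.ofReal := by
    have e1 : (Qᵀ * _root_.J k * Q).map Complex.ofReal
        = (Qᵀ * _root_.J k).map Complex.ofReal * Q.map Complex.ofReal :=
      Matrix.map_mul (f := Complex.ofRealHom)
    have e2 : (Qᵀ * _root_.J k).map Complex.ofReal
        = (Qᵀ).map Complex.ofReal * (_root_.J k).map Complex.ofReal :=
      Matrix.map_mul (f := Complex.ofRealHom)
    rw [e1, e2]
  have key : (Qᵀ * Q).map Complex.ofReal +
      Complex.I • -((Qᵀ * _root_.J k * Q).map Complex.ofReal)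
      = (Q.map Complex.ofReal)ᴴ *
        (1 - Complex.I • (_root_.J k).map Complex.ofReal) * (Q.map Complex.ofReal) := by
    rw [map_conjTranspose_real, Matrix.mul_sub, Matrix.mul_one, Matrix.mul_smul,
      Matrix.sub_mul, Matrix.smul_mul, hq, hqjq, smul_neg, ← sub_eq_add_neg]
  rw [key]
  exact (H_posSemidef k).conjTranspose_mul_mul_same _
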